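/- arXiv:2410.18915 — 4 statements merged into one kernel-verified Lean document; each statement's English description precedes it below -/
import Mathlib

section
/- Assume Constraint I, and suppose that Φ(λ) ≥ 1 + 3ε/4 for all λ ∈ (0,1). Then for every integer k with 1 ≤ k ≤ n and every probability distribution p over ℕ that is ε-far from having support size at most k, Σᵢ Q*(p_i) > (1 + 3ε/4)·k. -/
/-- The degree-`d` Chebyshev polynomial of the first kind, as a real function. -/
noncomputable def cheb : ℕ → ℝ → ℝ
  | 0, _ => 1
  | 1, x => x
  | (n+2), x => 2 * x * cheb (n+1) x - cheb n x

/-- `ψ(x) = (r+ℓ−2x)/(r−ℓ)`. -/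
noncomputable def psiMap (ℓ r x : ℝ) : ℝ := (r + ℓ - 2 * x) / (r - ℓ)

/-- `δ = 1 / T_d(1 + 2α/(1−α))` where `α = ℓ/r`. -/
noncomputable def cDelta (ℓ r : ℝ) (d : ℕ) : ℝ :=
  1 / cheb d (1 + 2 * (ℓ / r) / (1 - ℓ / r))

/-- `P_d(x) = −δ·T_d(ψ(x))`. -/
noncomputable def Pd (ℓ r : ℝ) (d : ℕ) (x : ℝ) : ℝ := - cDelta ℓ r d * cheb d (psiMap ℓ r x)

/-- `Q(x) = 1 + e^{−mx}·P_d(x)`. -/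
noncomputable def Qfun (ℓ r : ℝ) (d : ℕ) (m x : ℝ) : ℝ :=
  1 + Real.exp (-(m * x)) * Pd ℓ r d x

/-- `Q*(x) = 1 + P_d(x)` for `x < ℓ` and `1 − δ` for `x ≥ ℓ`. -/
noncomputable def Qstar (ℓ r : ℝ) (d : ℕ) (x : ℝ) : ℝ :=
  if x < ℓ then 1 + Pd ℓ r d x else 1 - cDelta ℓ r d

/-- Constraint I: `r ≥ 3ℓ` and `d ≥ 4·√((r−ℓ)/(2ℓ))·ln(20/ε)`. -/
def ConstraintI (ℓ r : ℝ) (d : ℕ) (ε : ℝ) : Prop :=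
  r ≥ 3 * ℓ ∧ (d : ℝ) ≥ 4 * Real.sqrt ((r - ℓ) / (2 * ℓ)) * Real.log (20 / ε)

/-- Constraint II: `m ≥ 5.5·d/(r−ℓ)`. -/
def ConstraintII (ℓ r : ℝ) (d : ℕ) (m : ℝ) : Prop :=
  m ≥ 5.5 * d / (r - ℓ)

/-- Constraint III: `m ≤ ε²n²/256` and
`d⁶·9^d·((r+ℓ)/(r−ℓ))^{2d−2} ≤ (1/4)·m·(r−ℓ)²·n²`. -/
def ConstraintIII (ℓ r : ℝ) (d : ℕ) (m ε : ℝ) (n : ℕ) : Prop :=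
  m ≤ ε ^ 2 * (n : ℝ) ^ 2 / 256 ∧
  (d : ℝ) ^ 6 * 9 ^ d * ((r + ℓ) / (r - ℓ)) ^ (2 * d - 2) ≤
    (1 / 4) * m * (r - ℓ) ^ 2 * (n : ℝ) ^ 2

/-- Constraint IV: `ℓ ≤ ε/(20n)`. -/
def ConstraintIV (ℓ ε : ℝ) (n : ℕ) : Prop := ℓ ≤ ε / (20 * n)

/-- Constraint IVb: `ℓ ≤ (1/3)·(ε/n)·log₂(1/ε)`. -/
def ConstraintIVb (ℓ ε : ℝ) (n : ℕ) : Prop :=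
  ℓ ≤ (1 / 3) * (ε / n) * Real.logb 2 (1 / ε)

/-- A probability distribution over `ℕ`: a nonnegative sequence summing to `1`. -/
def IsDist (p : ℕ → ℝ) : Prop := (∀ i, 0 ≤ p i) ∧ ∑' i, p i = 1

/-- Total variation distance `(1/2)·Σᵢ|p_i − q_i|`. -/
noncomputable def dTV (p q : ℕ → ℝ) : ℝ := (1 / 2) * ∑' i, |p i - q i|

/-- `p` is `ε`-far from having support size at most `n`. -/
def FarFromSuppSize (ε : ℝ) (n : ℕ) (p : ℕ → ℝ) : Prop :=
  ∀ q : ℕ → ℝ, IsDist q → {i | q i ≠ 0}.encard ≤ n → dTV p q > ε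

/-- `Φ(λ) = (1 + ε/(λ·ℓ·n))·Q*(λ·ℓ)`. -/
noncomputable def Phi (ℓ r : ℝ) (d : ℕ) (ε : ℝ) (n : ℕ) (lam : ℝ) : ℝ :=
  (1 + ε / (lam * ℓ * n)) * Qstar ℓ r d (lam * ℓ)

lemma cheb_zero (x : ℝ) : cheb 0 x = 1 := rfl
lemma cheb_one (x : ℝ) : cheb 1 x = x := rfl
lemma cheb_two_step (d : ℕ) (x : ℝ) :
    cheb (d+2) x = 2 * x * cheb (d+1) x - cheb d x := rfl

lemma one_le_cheb_aux (x : ℝ) (hx : 1 ≤ x) :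
    ∀ d, 1 ≤ cheb d x ∧ cheb d x ≤ cheb (d+1) x := by
  intro d
  induction d with
  | zero => exact ⟨le_refl _, by rw [cheb_zero, cheb_one]; exact hx⟩
  | succ d ih =>
    obtain ⟨h1, h2⟩ := ih
    have h3 : 1 ≤ cheb (d+1) x := le_trans h1 h2
    refine ⟨h3, ?_⟩
    rw [cheb_two_step]
    nlinarith

lemma one_le_cheb (d : ℕ) (x : ℝ) (hx : 1 ≤ x) : 1 ≤ cheb d x :=
  (one_le_cheb_aux x hx d).1

lemma cheb_mono_aux (a b : ℝ) (ha : 1 ≤ a) (hab : a ≤ b) :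
    ∀ d, cheb d b - cheb d a ≥ 0 ∧ cheb d b - cheb d a ≤ cheb (d+1) b - cheb (d+1) a := by
  intro d
  induction d with
  | zero => refine ⟨by rw [cheb_zero, cheb_zero]; linarith, ?_⟩
            rw [cheb_zero, cheb_zero, cheb_one, cheb_one]; linarith
  | succ d ih =>
    obtain ⟨h1, h2⟩ := ih
    have h3 : cheb (d+1) b - cheb (d+1) a ≥ 0 := le_trans h1 h2
    refine ⟨h3, ?_⟩
    have hb1 : 1 ≤ cheb (d+1) b := one_le_cheb _ _ (le_trans ha hab)
    rw [cheb_two_step, cheb_two_step]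
    nlinarith

lemma cheb_mono (d : ℕ) (a b : ℝ) (ha : 1 ≤ a) (hab : a ≤ b) :
    cheb d a ≤ cheb d b := by
  have := (cheb_mono_aux a b ha hab d).1; linarith

lemma cheb_le_pow_aux (M x : ℝ) (hx : 1 ≤ x) (hxM : x ≤ M) :
    ∀ d, cheb d x ≤ (2*M)^d ∧ cheb (d+1) x ≤ (2*M)^(d+1) := by
  have hM : 1 ≤ M := le_trans hx hxM
  intro d
  induction d with
  | zero =>
    constructor
    · rw [cheb_zero]; norm_num
    · rw [cheb_one]; rw [pow_one]; linarith
  | succ d ih =>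
    obtain ⟨h1, h2⟩ := ih
    refine ⟨h2, ?_⟩
    have h0 : 1 ≤ cheb d x := one_le_cheb _ _ hx
    rw [cheb_two_step]
    have key : 2 * x * cheb (d+1) x ≤ 2*M*(2*M)^(d+1) := by
      have hc : 0 ≤ cheb (d+1) x := le_trans zero_le_one (one_le_cheb _ _ hx)
      have : 2*x ≤ 2*M := by linarith
      nlinarith [pow_nonneg (by linarith : (0:ℝ) ≤ 2*M) (d+1)]
    have : 2*M*(2*M)^(d+1) = (2*M)^(d+2) := by ring
    linarith

lemma cheb_le_pow (d : ℕ) (M x : ℝ) (hx : 1 ≤ x) (hxM : x ≤ M) :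
    cheb d x ≤ (2*M)^d := (cheb_le_pow_aux M x hx hxM d).1

lemma cheb_lipschitz_aux (M a b : ℝ) (ha : 1 ≤ a) (hab : a ≤ b) (hbM : b ≤ M) :
    ∀ d, cheb d b - cheb d a ≤ d*(2*M)^d*(b-a) ∧
      cheb (d+1) b - cheb (d+1) a ≤ (d+1)*(2*M)^(d+1)*(b-a) := by
  have hM : 1 ≤ M := le_trans (le_trans ha hab) hbM
  intro d
  induction d with
  | zero =>
    constructor
    · rw [cheb_zero, cheb_zero]; norm_num
    · rw [cheb_one, cheb_one]
      have h0 : 0 ≤ b - a := by linarith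
      push_cast
      nlinarith [mul_nonneg (by linarith : (0:ℝ) ≤ 2*M-1) h0]
  | succ d ih =>
    obtain ⟨h1, h2⟩ := ih
    refine ⟨by exact_mod_cast h2, ?_⟩
    have hd0 : cheb d b - cheb d a ≥ 0 := (cheb_mono_aux a b ha hab d).1
    have hd1 : cheb (d+1) b - cheb (d+1) a ≥ 0 := (cheb_mono_aux a b ha hab (d+1)).1
    have hbb : cheb (d+1) b ≤ (2*M)^(d+1) := cheb_le_pow (d+1) M b (le_trans ha hab) hbM
    have hcb1 : 1 ≤ cheb (d+1) b := one_le_cheb _ _ (le_trans ha hab)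
    rw [cheb_two_step, cheb_two_step]
    have e1 : 2*b*cheb (d+1) b - 2*a*cheb (d+1) a
        = 2*(b-a)*cheb (d+1) b + 2*a*(cheb (d+1) b - cheb (d+1) a) := by ring
    have t1 : 2*(b-a)*cheb (d+1) b ≤ 2*(b-a)*(2*M)^(d+1) := by nlinarith
    have t2 : 2*a*(cheb (d+1) b - cheb (d+1) a) ≤ 2*M*((d+1)*(2*M)^(d+1)*(b-a)) := by
      have haM : a ≤ M := le_trans hab hbM
      have := h2
      nlinarith
    have hpow : 0 ≤ (2*M)^(d+1) := pow_nonneg (by linarith) _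
    have hfin : 2*(b-a)*(2*M)^(d+1) + 2*M*(((d:ℝ)+1)*(2*M)^(d+1)*(b-a))
        ≤ ((d:ℝ)+2)*(2*M)^(d+2)*(b-a) := by
      have hkey : ((d:ℝ)+2)*(2*M)^(d+2)*(b-a)
          - (2*(b-a)*(2*M)^(d+1) + 2*M*(((d:ℝ)+1)*(2*M)^(d+1)*(b-a)))
          = (2*M-2)*((2*M)^(d+1)*(b-a)) := by ring
      nlinarith [mul_nonneg hpow (by linarith : (0:ℝ) ≤ b - a)]
    push_cast
    nlinarith

lemma cheb_lipschitz (d : ℕ) (M a b : ℝ) (ha : 1 ≤ a) (hab : a ≤ b) (hbM : b ≤ M) :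
    cheb d b - cheb d a ≤ d*(2*M)^d*(b-a) :=
  (cheb_lipschitz_aux M a b ha hab hbM d).1

lemma cheb_cosh (t : ℝ) : ∀ d : ℕ, cheb d (Real.cosh t) = Real.cosh (d * t) := by
  intro d
  induction d using Nat.strong_induction_on with
  | _ d ih =>
    match d with
    | 0 => simp [cheb_zero]
    | 1 => simp [cheb_one]
    | (d+2) =>
      rw [cheb_two_step, ih (d+1) (by omega), ih d (by omega)]
      have h1 : ((d:ℝ)+2)*t = ((d+1)*t) + t := by ring
      have h2 : (d:ℝ)*t = ((d+1)*t) - t := by ring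
      push_cast
      rw [h1, h2, Real.cosh_add, Real.cosh_sub]
      ring


lemma cosh_le_one_add_sq {u : ℝ} (h0 : 0 ≤ u) (h1 : u ≤ 1) :
    Real.cosh u ≤ 1 + u^2 := by
  have habs : |u| ≤ 1 := by rw [abs_of_nonneg h0]; exact h1
  have habs' : |(-u)| ≤ 1 := by rw [abs_neg]; exact habs
  have hb1 := Real.exp_bound habs (by norm_num : 0 < 3)
  have hb2 := Real.exp_bound habs' (by norm_num : 0 < 3)
  rw [Real.cosh_eq]
  have e1 : ∑ m ∈ Finset.range 3, u ^ m / m.factorial = 1 + u + u^2/2 := by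
    simp [Finset.sum_range_succ, Nat.factorial]
    try ring
  have e2 : ∑ m ∈ Finset.range 3, (-u) ^ m / m.factorial = 1 - u + u^2/2 := by
    simp [Finset.sum_range_succ, Nat.factorial]
    try ring
  rw [e1] at hb1
  rw [e2] at hb2
  rw [abs_of_nonneg h0] at hb1
  rw [abs_neg, abs_of_nonneg h0] at hb2
  have c1 : Real.exp u ≤ 1 + u + u^2/2 + u^3 * (4/(6*3)) := by
    have := (abs_sub_le_iff.1 hb1).1
    norm_num [Nat.factorial] at this ⊢
    nlinarith [this]
  have c2 : Real.exp (-u) ≤ 1 - u + u^2/2 + u^3 * (4/(6*3)) := by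
    have := (abs_sub_le_iff.1 hb2).1
    norm_num [Nat.factorial] at this ⊢
    nlinarith [this]
  have hu3 : u^3 ≤ u^2 := by nlinarith
  nlinarith

lemma one_add_sq_div_eight_le_cosh {u : ℝ} (h0 : 0 ≤ u) :
    1 + u^2/8 ≤ Real.cosh u := by
  rw [Real.cosh_eq]
  have h1 : (1 + u/2)^2 ≤ Real.exp u := by
    have := Real.add_one_le_exp (u/2)
    have h2 : (0:ℝ) ≤ 1 + u/2 := by linarith
    calc (1 + u/2)^2 ≤ (Real.exp (u/2))^2 := by nlinarith [Real.exp_pos (u/2)]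
    _ = Real.exp u := by rw [sq, ← Real.exp_add]; norm_num
  have h3 : 1 - u ≤ Real.exp (-u) := by
    have := Real.add_one_le_exp (-u)
    linarith
  nlinarith

lemma cosh_le_exp {u : ℝ} (h0 : 0 ≤ u) : Real.cosh u ≤ Real.exp u := by
  rw [Real.cosh_eq]
  have : Real.exp (-u) ≤ Real.exp u := Real.exp_le_exp.2 (by linarith)
  linarith

lemma exp_div_two_le_cosh (u : ℝ) : Real.exp u / 2 ≤ Real.cosh u := by
  rw [Real.cosh_eq]
  have := (Real.exp_pos (-u)).le
  linarith


set_option maxHeartbeats 1000000 in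
lemma qstar_facts (ℓ r : ℝ) (hℓ : 0 < ℓ) (hℓr : ℓ < r) (d : ℕ) (ε : ℝ)
    (hε0 : 0 < ε) (hε1 : ε < 1) (hCI : ConstraintI ℓ r d ε) :
    (∀ x : ℝ, 15*ℓ/16 ≤ x → 1 - ε/10 ≤ Qstar ℓ r d x) ∧
    (∀ x : ℝ, 0 ≤ x → 0 ≤ Qstar ℓ r d x) ∧
    Qstar ℓ r d 0 = 0 ∧
    (∃ A : ℝ, 0 ≤ A ∧ ∀ x : ℝ, 0 ≤ x → x < ℓ → Qstar ℓ r d x ≤ A * x) := by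
  obtain ⟨h3l, hdge⟩ := hCI
  have hrℓ : 0 < r - ℓ := by linarith
  set γ := 2*ℓ/(r-ℓ) with hγdef
  have hγ0 : 0 < γ := by positivity
  have hγ1 : γ ≤ 1 := by
    rw [hγdef, div_le_one hrℓ]; linarith
  have hr0 : 0 < r := lt_trans hℓ hℓr
  have harg : 1 + 2 * (ℓ / r) / (1 - ℓ / r) = 1 + γ := by
    rw [hγdef]
    have h1 : 1 - ℓ/r = (r - ℓ)/r := by field_simp
    rw [h1]
    field_simp
  have hψ : ∀ x : ℝ, psiMap ℓ r x = 1 + 2*(ℓ-x)/(r-ℓ) := by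
    intro x; unfold psiMap; field_simp; ring
  set L := Real.log (20/ε) with hLdef
  have hL0 : 0 ≤ L := Real.log_nonneg (by rw [le_div_iff₀ hε0]; linarith)
  set D := (d:ℝ) * Real.sqrt γ with hDdef
  have hD0 : 0 ≤ D := mul_nonneg (Nat.cast_nonneg d) (Real.sqrt_nonneg γ)
  have hprod : Real.sqrt ((r-ℓ)/(2*ℓ)) * Real.sqrt γ = 1 := by
    rw [← Real.sqrt_mul (by positivity) γ]
    rw [show (r-ℓ)/(2*ℓ)*γ = 1 by rw [hγdef]; field_simp]
    exact Real.sqrt_one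
  have h4L : 4*L ≤ D := by
    have h := mul_le_mul_of_nonneg_right hdge (Real.sqrt_nonneg γ)
    have e : 4 * Real.sqrt ((r-ℓ)/(2*ℓ)) * L * Real.sqrt γ = 4*L := by
      rw [mul_assoc, mul_assoc, mul_comm L (Real.sqrt γ), ← mul_assoc (Real.sqrt ((r-ℓ)/(2*ℓ))),
        hprod]
      ring
    rw [hDdef]; linarith [e ▸ h]
  set T0 := cheb d (1+γ) with hT0def
  have hsq1 : Real.sqrt γ ≤ 1 := by
    rw [show (1:ℝ) = Real.sqrt 1 from Real.sqrt_one.symm]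
    exact Real.sqrt_le_sqrt hγ1
  have hcosh1 : Real.cosh (Real.sqrt γ) ≤ 1 + γ := by
    have h := cosh_le_one_add_sq (Real.sqrt_nonneg γ) hsq1
    rwa [Real.sq_sqrt hγ0.le] at h
  have hT0ge : Real.exp D / 2 ≤ T0 := by
    calc Real.exp D / 2 ≤ Real.cosh D := exp_div_two_le_cosh D
    _ = cheb d (Real.cosh (Real.sqrt γ)) := by rw [cheb_cosh]
    _ ≤ cheb d (1+γ) := cheb_mono d _ _ (Real.one_le_cosh _) hcosh1
  have hT0pos : 0 < T0 := lt_of_lt_of_le (by positivity) hT0ge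
  have hT0ne : T0 ≠ 0 := ne_of_gt hT0pos
  have hT01 : 1 ≤ T0 := one_le_cheb d _ (by linarith)
  have hδdef : cDelta ℓ r d = 1/T0 := by unfold cDelta; rw [harg]
  have hδpos : 0 < cDelta ℓ r d := by rw [hδdef]; positivity
  have hδT0 : cDelta ℓ r d * T0 = 1 := by rw [hδdef]; field_simp
  have hδle : cDelta ℓ r d ≤ 2*Real.exp (-D) := by
    have h1 : 1/T0 ≤ 1/(Real.exp D/2) := one_div_le_one_div_of_le (by positivity) hT0ge
    have h2 : 1/(Real.exp D/2) = 2*Real.exp (-D) := by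
      rw [Real.exp_neg]; field_simp
    rw [hδdef]; linarith
  have hs2le : Real.sqrt 2 ≤ 3/2 := by
    nlinarith [Real.sq_sqrt (by norm_num : (0:ℝ) ≤ 2), Real.sqrt_nonneg 2]
  have hexpL : Real.exp (-L) = ε/20 := by
    rw [Real.exp_neg, hLdef, Real.exp_log (by positivity : (0:ℝ) < 20/ε), inv_div]
  have hδε : cDelta ℓ r d ≤ ε/10 := by
    have h1 : 2*Real.exp (-D) ≤ 2*Real.exp (-L) := by
      have : Real.exp (-D) ≤ Real.exp (-L) := Real.exp_le_exp.2 (by linarith)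
      linarith
    rw [hexpL] at h1; linarith
  -- main region bound
  have hmain : ∀ x : ℝ, 15*ℓ/16 ≤ x → 1 - ε/10 ≤ Qstar ℓ r d x := by
    intro x hx
    by_cases hxl : x < ℓ
    · have hlx : 0 ≤ ℓ - x := by linarith
      set γ' := 2*(ℓ-x)/(r-ℓ) with hγ'def
      have hγ'0 : 0 ≤ γ' := by positivity
      have hγ'16 : γ' ≤ γ/16 := by
        have he : γ/16 - γ' = 2*(x - 15*ℓ/16)/(r-ℓ) := by
          rw [hγ'def, hγdef]; field_simp; ring
        have h := div_nonneg (by linarith : (0:ℝ) ≤ 2*(x - 15*ℓ/16)) hrℓ.le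
        linarith
      set u := 2*Real.sqrt 2*Real.sqrt γ' with hudef
      have hu0 : 0 ≤ u := by positivity
      have hu2 : u^2 = 8*γ' := by
        have h2 : Real.sqrt 2^2 = 2 := Real.sq_sqrt (by norm_num)
        have hg : Real.sqrt γ'^2 = γ' := Real.sq_sqrt hγ'0
        calc u^2 = 4*(Real.sqrt 2^2)*(Real.sqrt γ'^2) := by rw [hudef]; ring
        _ = 8*γ' := by rw [h2, hg]; ring
      have hcoshu : 1 + γ' ≤ Real.cosh u := by
        have h := one_add_sq_div_eight_le_cosh hu0
        rw [hu2] at h; linarith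
      have hchain : cheb d (psiMap ℓ r x) ≤ Real.exp ((d:ℝ)*u) := by
        rw [hψ x, ← hγ'def]
        calc cheb d (1+γ') ≤ cheb d (Real.cosh u) := cheb_mono d _ _ (by linarith) hcoshu
        _ = Real.cosh ((d:ℝ)*u) := cheb_cosh u d
        _ ≤ Real.exp ((d:ℝ)*u) := cosh_le_exp (by positivity)
      have hsg : Real.sqrt γ' ≤ Real.sqrt γ / 4 := by
        have h1 : Real.sqrt γ' ≤ Real.sqrt (γ/16) := Real.sqrt_le_sqrt hγ'16
        have h16 : Real.sqrt (γ/16) = Real.sqrt γ / 4 := by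
          rw [show γ/16 = γ * (1/4)^2 by ring, Real.sqrt_mul hγ0.le,
            Real.sqrt_sq (by norm_num : (0:ℝ) ≤ 1/4)]
          ring
        linarith
      have hdu : (d:ℝ)*u ≤ (Real.sqrt 2/2)*D := by
        have hd0' : (0:ℝ) ≤ (d:ℝ)*(2*Real.sqrt 2) := by positivity
        calc (d:ℝ)*u = (d:ℝ)*(2*Real.sqrt 2)*Real.sqrt γ' := by rw [hudef]; ring
        _ ≤ (d:ℝ)*(2*Real.sqrt 2)*(Real.sqrt γ/4) := mul_le_mul_of_nonneg_left hsg hd0'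
        _ = (Real.sqrt 2/2)*D := by rw [hDdef]; ring
      have hchebpos : (0:ℝ) < cheb d (psiMap ℓ r x) := by
        have : 1 ≤ cheb d (psiMap ℓ r x) := by
          apply one_le_cheb; rw [hψ x, ← hγ'def]; linarith
        linarith
      have hbound : cDelta ℓ r d * cheb d (psiMap ℓ r x)
          ≤ (2*Real.exp (-D)) * Real.exp ((Real.sqrt 2/2)*D) :=
        mul_le_mul hδle (le_trans hchain (Real.exp_le_exp.2 hdu)) hchebpos.le (by positivity)
      have hexp : (2*Real.exp (-D)) * Real.exp ((Real.sqrt 2/2)*D) ≤ ε/10 := by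
        rw [mul_assoc, ← Real.exp_add]
        have hDL : -D + (Real.sqrt 2/2)*D ≤ -L := by
          nlinarith [mul_nonneg (by linarith : (0:ℝ) ≤ 3/2 - Real.sqrt 2) hD0]
        have h1 : Real.exp (-D + (Real.sqrt 2/2)*D) ≤ Real.exp (-L) := Real.exp_le_exp.2 hDL
        rw [hexpL] at h1; linarith
      simp only [Qstar, Pd]; rw [if_pos hxl]
      have := le_trans hbound hexp
      linarith
    · simp only [Qstar]; rw [if_neg hxl]
      linarith
  refine ⟨hmain, ?_, ?_, ?_⟩
  · -- nonneg
    intro x hx0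
    have hγ'γ : ∀ y : ℝ, 0 ≤ y → y < ℓ → cheb d (psiMap ℓ r y) ≤ T0 := by
      intro y hy0 hyl
      rw [hψ y, hT0def]
      apply cheb_mono
      · have := div_nonneg (by linarith : (0:ℝ) ≤ 2*(ℓ-y)) hrℓ.le
        linarith
      · have h2 : 1 + 2*(ℓ-y)/(r-ℓ) ≤ 1 + 2*ℓ/(r-ℓ) := by
          have : 2*(ℓ-y)/(r-ℓ) ≤ 2*ℓ/(r-ℓ) := by gcongr <;> linarith
          linarith
        rw [hγdef]; exact h2
    by_cases hxl : x < ℓ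
    · simp only [Qstar, Pd]; rw [if_pos hxl]
      have h1 := hγ'γ x hx0 hxl
      have h2 : cDelta ℓ r d * cheb d (psiMap ℓ r x) ≤ cDelta ℓ r d * T0 :=
        mul_le_mul_of_nonneg_left h1 hδpos.le
      rw [hδT0] at h2
      linarith
    · simp only [Qstar]; rw [if_neg hxl]
      have : cDelta ℓ r d ≤ 1 := by
        rw [hδdef]
        rw [div_le_one hT0pos]; exact hT01
      linarith
  · -- zero
    simp only [Qstar, Pd]; rw [if_pos hℓ]
    have hψ0 : psiMap ℓ r 0 = 1 + γ := by
      rw [hψ 0, hγdef]; ring_nf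
    rw [hψ0, ← hT0def]
    have := hδT0
    linarith
  · -- linear bound
    refine ⟨(1/T0)*((d:ℝ)*(2*(1+γ))^d)*(2/(r-ℓ)), by positivity, ?_⟩
    intro x hx0 hxl
    set γ' := 2*(ℓ-x)/(r-ℓ) with hγ'def
    have hγ'0 : 0 ≤ γ' := div_nonneg (by linarith) hrℓ.le
    have hγ'γ : γ' ≤ γ := by
      rw [hγ'def, hγdef]
      gcongr <;> linarith
    have hlip := cheb_lipschitz d (1+γ) (1+γ') (1+γ) (by linarith) (by linarith) (le_refl _)
    have hdiff : (1+γ) - (1+γ') = 2*x/(r-ℓ) := by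
      rw [hγ'def, hγdef]; field_simp; ring
    simp only [Qstar, Pd]; rw [if_pos hxl, hψ x, ← hγ'def]
    have h1 : 1 + -cDelta ℓ r d * cheb d (1+γ') = cDelta ℓ r d * (T0 - cheb d (1+γ')) := by
      have := hδT0; rw [hT0def] at this ⊢; nlinarith [this]
    rw [h1]
    have h2 : T0 - cheb d (1+γ') ≤ (d:ℝ)*(2*(1+γ))^d*(2*x/(r-ℓ)) := by
      rw [hT0def]; rw [hdiff] at hlip; linarith
    have h3 : cDelta ℓ r d * (T0 - cheb d (1+γ')) ≤ cDelta ℓ r d * ((d:ℝ)*(2*(1+γ))^d*(2*x/(r-ℓ))) :=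
      mul_le_mul_of_nonneg_left h2 hδpos.le
    rw [hδdef] at h3 ⊢
    calc 1/T0 * (T0 - cheb d (1+γ')) ≤ 1/T0 * ((d:ℝ)*(2*(1+γ))^d*(2*x/(r-ℓ))) := h3
    _ = 1/T0*((d:ℝ)*(2*(1+γ))^d)*(2/(r-ℓ))*x := by field_simp


lemma isDist_summable {p : ℕ → ℝ} (hp : IsDist p) : Summable p := by
  by_contra h
  have := tsum_eq_zero_of_not_summable h
  rw [hp.2] at this
  norm_num at this

lemma exists_max_compl (p : ℕ → ℝ) (hsum : Summable p) (hnn : ∀ i, 0 ≤ p i)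
    (T : Finset ℕ) : ∃ i ∉ T, ∀ j ∉ T, p j ≤ p i := by
  by_cases hz : ∀ j ∉ T, p j ≤ 0
  · obtain ⟨i0, hi0⟩ := Infinite.exists_notMem_finset T
    exact ⟨i0, hi0, fun j hj => le_trans (hz j hj) (hnn i0)⟩
  · push_neg at hz
    obtain ⟨j0, hj0T, hj0⟩ := hz
    have hfin : {j | p j0 ≤ p j}.Finite := by
      have hcof := hsum.tendsto_cofinite_zero
      have hev : ∀ᶠ j in Filter.cofinite, p j < p j0 :=
        hcof.eventually (Iio_mem_nhds hj0)
      have : {j | ¬ p j < p j0}.Finite := hev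
      convert this using 1
      ext j; simp [not_lt]
    set F := hfin.toFinset \ T with hF
    have hj0F : j0 ∈ F := by
      rw [hF, Finset.mem_sdiff, Set.Finite.mem_toFinset]
      exact ⟨by simp, hj0T⟩
    obtain ⟨i, hiF, hmax⟩ := F.exists_max_image p ⟨j0, hj0F⟩
    have hiT : i ∉ T := by
      rw [hF, Finset.mem_sdiff] at hiF; exact hiF.2
    refine ⟨i, hiT, fun j hjT => ?_⟩
    by_cases hjc : p j0 ≤ p j
    · exact hmax j (by rw [hF, Finset.mem_sdiff, Set.Finite.mem_toFinset]; exact ⟨hjc, hjT⟩)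
    · push_neg at hjc
      exact le_trans hjc.le (le_trans (le_refl _) (hmax j0 hj0F))

lemma exists_topk (p : ℕ → ℝ) (hsum : Summable p) (hnn : ∀ i, 0 ≤ p i) (k : ℕ) :
    ∃ T : Finset ℕ, T.card = k ∧ ∀ i ∉ T, ∀ j ∈ T, p i ≤ p j := by
  induction k with
  | zero => exact ⟨∅, rfl, by simp⟩
  | succ k ih =>
    obtain ⟨T, hcard, htop⟩ := ih
    obtain ⟨i0, hi0T, hi0max⟩ := exists_max_compl p hsum hnn T
    refine ⟨insert i0 T, by rw [Finset.card_insert_of_notMem hi0T, hcard], ?_⟩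
    intro i hi j hj
    have hiT : i ∉ T := fun h => hi (Finset.mem_insert_of_mem h)
    have hii0 : i ≠ i0 := fun h => hi (h ▸ Finset.mem_insert_self i0 T)
    rcases Finset.mem_insert.1 hj with hj0 | hjT
    · exact hj0 ▸ hi0max i hiT
    · exact htop i hiT j hjT

lemma tail_gt (p : ℕ → ℝ) (hnn : ∀ i, 0 ≤ p i) (hsum : Summable p)
    (h1 : ∑' i, p i = 1) (k : ℕ) (hk : 1 ≤ k) (ε : ℝ)
    (hfar : FarFromSuppSize ε k p) (T : Finset ℕ) (hT : T.card = k) :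
    ε < ∑' (i : ↑((↑T : Set ℕ)ᶜ)), p ↑i := by
  have hTne : T.Nonempty := Finset.card_pos.1 (by omega)
  obtain ⟨i0, hi0⟩ := hTne
  set M := 1 - ∑ i ∈ T, p i with hM
  set t := ∑' (i : ↑((↑T : Set ℕ)ᶜ)), p ↑i with ht
  have hsplit : (∑ i ∈ T, p i) + t = 1 := by
    rw [ht, Summable.sum_add_tsum_compl hsum, h1]
  have hMt : M = t := by rw [hM]; linarith
  have htnn : 0 ≤ t := tsum_nonneg (fun i => hnn i)
  set q : ℕ → ℝ := fun i => if i = i0 then p i0 + M else if i ∈ T then p i else 0 with hq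
  have hqz : ∀ i ∉ T, q i = 0 := by
    intro i hi
    rw [hq]
    simp only
    rw [if_neg (fun h : i = i0 => hi (by rw [h]; exact hi0)), if_neg hi]
  have hqsum : Summable q := summable_of_ne_finset_zero hqz
  have hqtsum : ∑' i, q i = 1 := by
    rw [tsum_eq_sum hqz]
    have : ∑ i ∈ T, q i = ∑ i ∈ T, (p i + if i = i0 then M else 0) := by
      apply Finset.sum_congr rfl
      intro i hi
      rw [hq]
      by_cases h : i = i0
      · subst h; simp
      · simp [h, hi]
    rw [this, Finset.sum_add_distrib, Finset.sum_ite_eq' T i0 (fun _ => M)]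
    rw [if_pos hi0]
    linarith
  have hqnn : ∀ i, 0 ≤ q i := by
    intro i
    rw [hq]
    dsimp only
    split_ifs with h h2
    · have := hnn i0; rw [hMt] at *; linarith
    · exact hnn i
    · exact le_refl 0
  have hsupp : {i | q i ≠ 0}.encard ≤ (k : ℕ∞) := by
    have hsub : {i | q i ≠ 0} ⊆ (↑T : Set ℕ) := by
      intro i hi
      by_contra hiT
      exact hi (hqz i hiT)
    calc {i | q i ≠ 0}.encard ≤ (↑T : Set ℕ).encard := Set.encard_mono hsub
    _ = (T.card : ℕ∞) := Set.encard_coe_eq_coe_finsetCard T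
    _ = (k : ℕ∞) := by rw [hT]
  have hd := hfar q ⟨hqnn, hqtsum⟩ hsupp
  -- compute dTV p q = t
  have hMnn : 0 ≤ M := by rw [hMt]; exact htnn
  have habs : ∀ i, |p i - q i| = (if i = i0 then M else if i ∈ T then 0 else p i) := by
    intro i
    rw [hq]
    dsimp only
    split_ifs with h h2
    · subst h
      rw [show p i - (p i + M) = -M by ring, abs_neg, abs_of_nonneg hMnn]
    · simp
    · simp [abs_of_nonneg (hnn i)]
  have habs_sum : Summable (fun i => |p i - q i|) := (hsum.sub hqsum).abs
  have hdtv : dTV p q = (1/2) * (M + t) := by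
    rw [dTV]
    congr 1
    rw [← Summable.sum_add_tsum_compl (s := T) habs_sum]
    congr 1
    · rw [Finset.sum_congr rfl (fun i _ => habs i)]
      rw [Finset.sum_eq_single_of_mem i0 hi0
        (fun b hb hbne => by rw [if_neg hbne, if_pos hb])]
      rw [if_pos rfl]
    · rw [ht]
      apply tsum_congr
      intro i
      have hiT : (i : ℕ) ∉ T := i.2
      rw [habs, if_neg (fun h : (i:ℕ) = i0 => hiT (by rw [h]; exact hi0)), if_neg hiT]
  rw [hdtv, hMt] at hd
  linarith


set_option maxHeartbeats 1000000 in
/-- Under Constraint I, if `Φ(λ) ≥ 1 + 3ε/4` for all `λ ∈ (0,1)`, then for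
every `1 ≤ k ≤ n` and every distribution `p` that is `ε`-far from having support size at
most `k`, `Σᵢ Q*(p_i) > (1 + 3ε/4)·k`. -/
theorem Qstar_bound_from_phi (ℓ r : ℝ) (hℓ : 0 < ℓ) (hℓr : ℓ < r) (hr : r ≤ 1)
    (d : ℕ) (hd : 1 ≤ d) (ε : ℝ) (hε0 : 0 < ε) (hε1 : ε < 1) (n : ℕ) (hn : 1 ≤ n)
    (hCI : ConstraintI ℓ r d ε)
    (hPhi : ∀ lam ∈ Set.Ioo (0 : ℝ) 1, Phi ℓ r d ε n lam ≥ 1 + 3 * ε / 4) :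
    ∀ k : ℕ, 1 ≤ k → k ≤ n → ∀ p : ℕ → ℝ, IsDist p → FarFromSuppSize ε k p →
      (∑' i, Qstar ℓ r d (p i)) > (1 + 3 * ε / 4) * k := by

  intro k hk1 hkn p hpdist hfar
  obtain ⟨hpnn, hp1⟩ := hpdist
  have hpsum : Summable p := isDist_summable ⟨hpnn, hp1⟩
  obtain ⟨hreg, hqnn, hq0, A, hA0, hlin⟩ := qstar_facts ℓ r hℓ hℓr d ε hε0 hε1 hCI
  set c : ℝ := 1 + 3*ε/4 with hc
  have hc0 : 0 < c := by rw [hc]; linarith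
  have hn0 : (0:ℝ) < (n:ℝ) := by exact_mod_cast Nat.pos_of_ne_zero (by omega)
  have hk0 : (1:ℝ) ≤ (k:ℝ) := by exact_mod_cast hk1
  have hknR : (k:ℝ) ≤ (n:ℝ) := by exact_mod_cast hkn
  -- light bound from hPhi
  have key_light : ∀ x : ℝ, 0 < x → x < ℓ → c * (x*(n:ℝ)) ≤ (x*(n:ℝ)+ε) * Qstar ℓ r d x := by
    intro x hx0 hxl
    have hlam : x/ℓ ∈ Set.Ioo (0:ℝ) 1 := ⟨by positivity, by rw [div_lt_one hℓ]; exact hxl⟩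
    have h := hPhi (x/ℓ) hlam
    rw [Phi] at h
    rw [div_mul_cancel₀ x (ne_of_gt hℓ)] at h
    have hxn : (0:ℝ) < x*(n:ℝ) := by positivity
    have h2 : c * (x*(n:ℝ)) ≤ ((1 + ε/(x*(n:ℝ))) * Qstar ℓ r d x) * (x*(n:ℝ)) :=
      mul_le_mul_of_nonneg_right h hxn.le
    have h3 : ((1 + ε/(x*(n:ℝ))) * Qstar ℓ r d x) * (x*(n:ℝ))
        = (x*(n:ℝ)+ε) * Qstar ℓ r d x := by
      field_simp
      try ring
    linarith [h3 ▸ h2]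
  -- summability of f
  set f : ℕ → ℝ := fun i => Qstar ℓ r d (p i) with hf
  have hfnn : ∀ i, 0 ≤ f i := fun i => hqnn (p i) (hpnn i)
  have hfsum : Summable f := by
    have hH : {i | ℓ ≤ p i}.Finite := by
      have hev : ∀ᶠ i in Filter.cofinite, p i < ℓ :=
        hpsum.tendsto_cofinite_zero.eventually (Iio_mem_nhds hℓ)
      have : {i | ¬ p i < ℓ}.Finite := hev
      convert this using 1
      ext i; simp [not_lt]
    rw [← Set.Finite.summable_compl_iff hH]
    refine Summable.of_nonneg_of_le (fun i => hfnn _) (fun i => ?_)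
      ((hpsum.mul_left A).subtype _)
    have hi : p (i:ℕ) < ℓ := by
      have := i.2
      simp only [Set.mem_compl_iff, Set.mem_setOf_eq, not_le] at this
      exact this
    exact hlin (p i) (hpnn i) hi
  -- top k
  obtain ⟨T, hTcard, hTtop⟩ := exists_topk p hpsum hpnn k
  have hTne : T.Nonempty := Finset.card_pos.1 (by omega)
  obtain ⟨im, him, hmin⟩ := T.exists_min_image p hTne
  set θ := p im with hθ
  set t := ∑' (i : ↑((↑T : Set ℕ)ᶜ)), p ↑i with htdef
  have ht : ε < t := tail_gt p hpnn hpsum hp1 k hk1 ε hfar T hTcard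
  have hsplitp : (∑ i ∈ T, p i) + t = 1 := by rw [htdef, Summable.sum_add_tsum_compl hpsum, hp1]
  have hθpos : 0 < θ := by
    by_contra hcon
    push_neg at hcon
    have hz : ∀ (i : ↑((↑T : Set ℕ)ᶜ)), p ↑i = 0 := by
      intro i
      have hiT : (i:ℕ) ∉ T := fun h => i.2 (Finset.mem_coe.2 h)
      have h1 := hTtop (i:ℕ) hiT im him
      have h2 := hpnn (i:ℕ)
      rw [← hθ] at h1
      linarith
    have : t = 0 := by rw [htdef, tsum_congr hz, tsum_zero]
    linarith
  set β : ℝ := 1 - ε/10 with hβ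
  have hβpos : 0 < β := by rw [hβ]; linarith
  set G : ℝ := c*(θ*(n:ℝ))/(θ*(n:ℝ)+ε) with hG
  have hs : (0:ℝ) < θ*(n:ℝ)+ε := by positivity
  have hGpos : 0 < G := by rw [hG]; positivity
  set Bθ : ℝ := min β G with hBθ
  have hBθpos : 0 < Bθ := lt_min hβpos hGpos
  -- per-index bounds
  have hT_bound : ∀ i ∈ T, Bθ ≤ f i := by
    intro i hi
    have hθle : θ ≤ p i := hmin i hi
    by_cases hri : 15*ℓ/16 ≤ p i
    · exact le_trans (min_le_left _ _) (hreg (p i) hri)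
    · push_neg at hri
      have hpl : p i < ℓ := by linarith
      have hp0 : 0 < p i := lt_of_lt_of_le hθpos hθle
      have hxn : (0:ℝ) < p i*(n:ℝ) := by positivity
      have hstep : G ≤ c*(p i*(n:ℝ))/(p i*(n:ℝ)+ε) := by
        rw [hG, div_le_div_iff₀ hs (by positivity)]
        nlinarith [mul_nonneg (mul_nonneg hc0.le hε0.le) (mul_nonneg (sub_nonneg.2 hθle) hn0.le)]
      have hstep2 : c*(p i*(n:ℝ))/(p i*(n:ℝ)+ε) ≤ f i := by
        rw [div_le_iff₀ (by positivity)]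
        have := key_light (p i) hp0 hpl
        rw [hf]
        linarith
      exact le_trans (min_le_right _ _) (le_trans hstep hstep2)
  have hTail_bound : ∀ (i : ↑((↑T : Set ℕ)ᶜ)), p ↑i * (Bθ/θ) ≤ f ↑i := by
    intro i
    have hiT : (i:ℕ) ∉ T := fun h => i.2 (Finset.mem_coe.2 h)
    have hxθ : p ↑i ≤ θ := hTtop (i:ℕ) hiT im him
    have hx0 : 0 ≤ p ↑i := hpnn _
    rcases eq_or_lt_of_le hx0 with hxz | hxpos
    · have hval : Qstar ℓ r d (p ↑i) = 0 := by rw [← hxz]; exact hq0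
      have hzero : p ↑i * (Bθ/θ) = 0 := by rw [← hxz]; ring
      show p ↑i * (Bθ/θ) ≤ Qstar ℓ r d (p ↑i)
      rw [hval, hzero]
    · by_cases hri : 15*ℓ/16 ≤ p ↑i
      · have h1 : p ↑i * (Bθ/θ) ≤ Bθ := by
          have : p ↑i * (Bθ/θ) ≤ θ * (Bθ/θ) :=
            mul_le_mul_of_nonneg_right hxθ (by positivity)
          have he : θ * (Bθ/θ) = Bθ := by field_simp
          linarith
        exact le_trans h1 (le_trans (min_le_left _ _) (hreg (p ↑i) hri))
      · push_neg at hri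
        have hpl : p ↑i < ℓ := by linarith
        have hxn : (0:ℝ) < p ↑i*(n:ℝ) := by positivity
        have h1 : p ↑i * (Bθ/θ) ≤ p ↑i * (G/θ) :=
          mul_le_mul_of_nonneg_left ((div_le_div_iff_of_pos_right hθpos).2 (min_le_right _ _)) hx0
        have h2 : p ↑i * (G/θ) = c*(p ↑i*(n:ℝ))/(θ*(n:ℝ)+ε) := by
          rw [hG]; field_simp
        have h3 : c*(p ↑i*(n:ℝ))/(θ*(n:ℝ)+ε) ≤ c*(p ↑i*(n:ℝ))/(p ↑i*(n:ℝ)+ε) := by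
          rw [div_le_div_iff₀ (by positivity) (by positivity)]
          nlinarith [mul_nonneg (mul_nonneg (mul_nonneg hc0.le hxn.le) hn0.le)
            (sub_nonneg.2 hxθ)]
        have h4 : c*(p ↑i*(n:ℝ))/(p ↑i*(n:ℝ)+ε) ≤ f ↑i := by
          rw [div_le_iff₀ (by positivity)]
          have := key_light (p ↑i) hxpos hpl
          rw [hf]
          linarith
        linarith
  -- assemble sums
  have hsplitf : (∑ i ∈ T, f i) + ∑' (i : ↑((↑T : Set ℕ)ᶜ)), f ↑i = ∑' i, f i :=
    Summable.sum_add_tsum_compl hfsum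
  have hsumT : (k:ℝ) * Bθ ≤ ∑ i ∈ T, f i := by
    have := Finset.card_nsmul_le_sum T f Bθ (fun i hi => hT_bound i hi)
    rwa [hTcard, nsmul_eq_mul] at this
  have hsumTail : t * (Bθ/θ) ≤ ∑' (i : ↑((↑T : Set ℕ)ᶜ)), f ↑i := by
    have hle := Summable.tsum_le_tsum hTail_bound
      ((hpsum.subtype _).mul_right (Bθ/θ)) (hfsum.subtype _)
    rwa [tsum_mul_right, ← htdef] at hle
  have hkθ : (k:ℝ) * θ ≤ 1 - t := by
    have := Finset.card_nsmul_le_sum T p θ (fun i hi => hmin i hi)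
    rw [hTcard, nsmul_eq_mul] at this
    linarith
  have htotal : (k:ℝ)*Bθ + t*(Bθ/θ) ≤ ∑' i, f i := by
    rw [← hsplitf]
    exact add_le_add hsumT hsumTail
  rw [gt_iff_lt]
  -- final arithmetic
  have hfinal : c * (k:ℝ) < (k:ℝ)*Bθ + t*(Bθ/θ) := by
    by_cases hcase : G ≤ β
    · have hBG : Bθ = G := min_eq_right hcase
      rw [hBG]
      have e : (k:ℝ)*G + t*(G/θ) = c*(n:ℝ)*((k:ℝ)*θ + t)/(θ*(n:ℝ)+ε) := by
        rw [hG]; field_simp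
      rw [e, lt_div_iff₀ hs]
      nlinarith [mul_nonneg (mul_nonneg hc0.le hε0.le) (sub_nonneg.2 hknR),
        mul_pos (mul_pos hc0 hn0) (by linarith : (0:ℝ) < t - ε)]
    · push_neg at hcase
      have hBG : Bθ = β := min_eq_left hcase.le
      rw [hBG]
      have hkθ' : (k:ℝ)*θ < 1 - ε := by linarith
      have h1 : (k:ℝ)*(17*ε/20)*θ < (1-ε)*(17*ε/20) := by nlinarith
      have h2 : (1-ε)*(17*ε/20) ≤ ε*β := by rw [hβ]; nlinarith
      have h3 : ε*β < t*β := by nlinarith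
      have h4 : (k:ℝ)*(17*ε/20) < t*(β/θ) := by
        rw [show t*(β/θ) = t*β/θ by ring, lt_div_iff₀ hθpos]
        nlinarith [h1, h2, h3]
      have e : c*(k:ℝ) = (k:ℝ)*β + (k:ℝ)*(17*ε/20) := by rw [hc, hβ]; ring
      linarith
  exact lt_of_lt_of_le hfinal htotal
end

section
/- For every natural number d and every γ ∈ (0,1), the derivative of T_d satisfies T_d′(1+γ) ≥ (d/√(3γ))·(T_d(1+γ) − 1). -/
open Polynomial Polynomial.Chebyshev in
lemma cheb_eq_eval (d : ℕ) (x : ℝ) : cheb d x = (T ℝ d).eval x := by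
  induction d using Nat.strong_induction_on with
  | _ d ih =>
    match d with
    | 0 => simp [cheb, T_zero]
    | 1 => simp [cheb, T_one]
    | (n+2) =>
      have h : ((n + 2 : ℕ) : ℤ) = (n : ℤ) + 2 := by push_cast; ring
      rw [cheb, h, T_add_two]
      simp [ih n (by omega), ih (n+1) (by omega)]

open Polynomial Polynomial.Chebyshev in
lemma pell (n : ℕ) (x : ℝ) :
    (T ℝ n).eval x ^ 2 - (x ^ 2 - 1) * (U ℝ ((n : ℤ) - 1)).eval x ^ 2 = 1 := by
  induction n with
  | zero => simp [T_zero, U_neg_one]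
  | succ n ih =>
    have e1 := T_eq_X_mul_T_sub_pol_U ℝ ((n:ℤ) - 1)
    rw [show (n:ℤ) - 1 + 2 = (n:ℤ) + 1 by ring, show (n:ℤ) - 1 + 1 = (n:ℤ) by ring] at e1
    have h1 := congr_arg (Polynomial.eval x) e1
    simp only [eval_sub, eval_mul, eval_X, eval_one, eval_pow] at h1
    have e2 := U_eq_X_mul_U_add_T ℝ ((n:ℤ) - 1)
    rw [show (n:ℤ) - 1 + 1 = (n:ℤ) by ring] at e2
    have h2 := congr_arg (Polynomial.eval x) e2
    simp only [eval_add, eval_mul, eval_X] at h2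
    have hc : ((n + 1 : ℕ) : ℤ) = (n : ℤ) + 1 := by push_cast; ring
    rw [hc, show (n:ℤ) + 1 - 1 = (n:ℤ) by ring, h1, h2]
    nlinarith [ih]

open Polynomial Polynomial.Chebyshev in
lemma U_mono (n : ℕ) (x : ℝ) (hx : 1 ≤ x) :
    0 ≤ (U ℝ n).eval x ∧ (U ℝ n).eval x ≤ (U ℝ ((n:ℤ) + 1)).eval x := by
  induction n with
  | zero => simp [U_zero, U_one]; linarith
  | succ n ih =>
    obtain ⟨h0, h1⟩ := ih
    have hc : ((n + 1 : ℕ) : ℤ) = (n : ℤ) + 1 := by push_cast; ring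
    rw [hc, show (n:ℤ) + 1 + 1 = (n:ℤ) + 2 by ring]
    have h2 : (U ℝ ((n:ℤ) + 2)).eval x
        = 2 * x * (U ℝ ((n:ℤ) + 1)).eval x - (U ℝ (n:ℤ)).eval x := by
      have := congr_arg (Polynomial.eval x) (U_add_two ℝ (n:ℤ))
      simpa using this
    constructor
    · linarith
    · rw [h2]; nlinarith

open Polynomial Polynomial.Chebyshev in
lemma T_ge_one (n : ℕ) (x : ℝ) (hx : 1 ≤ x) : 1 ≤ (T ℝ (n:ℤ)).eval x := by
  have key : ∀ m : ℕ, 1 ≤ (T ℝ (m:ℤ)).eval x ∧ (T ℝ (m:ℤ)).eval x ≤ (T ℝ ((m:ℤ) + 1)).eval x := by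
    intro m
    induction m with
    | zero => simp [T_zero, T_one]; linarith
    | succ m ih =>
      obtain ⟨h0, h1⟩ := ih
      have hc : ((m + 1 : ℕ) : ℤ) = (m : ℤ) + 1 := by push_cast; ring
      rw [hc, show (m:ℤ) + 1 + 1 = (m:ℤ) + 2 by ring]
      have h2 : (T ℝ ((m:ℤ) + 2)).eval x
          = 2 * x * (T ℝ ((m:ℤ) + 1)).eval x - (T ℝ (m:ℤ)).eval x := by
        have := congr_arg (Polynomial.eval x) (T_add_two ℝ (m:ℤ))
        simpa using this
      constructor
      · linarith
      · rw [h2]; nlinarith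
  exact (key n).1

open Polynomial Polynomial.Chebyshev in
lemma cheb_deriv (d : ℕ) (x : ℝ) :
    deriv (cheb d) x = (d : ℝ) * (U ℝ ((d:ℤ) - 1)).eval x := by
  have hf : cheb d = fun y => (T ℝ (d:ℤ)).eval y := funext (cheb_eq_eval d)
  rw [hf, Polynomial.deriv, T_derivative_eq_U]
  simp


/-- For every natural number `d` and every `γ ∈ (0,1)`,
`T_d′(1+γ) ≥ (d/√(3γ))·(T_d(1+γ) − 1)`. -/
theorem cheb_deriv_lower_bound (d : ℕ) (γ : ℝ) (hγ : γ ∈ Set.Ioo (0 : ℝ) 1) :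
    deriv (cheb d) (1 + γ) ≥ ((d : ℝ) / Real.sqrt (3 * γ)) * (cheb d (1 + γ) - 1) := by
  obtain ⟨hγ0, hγ1⟩ := hγ
  set x : ℝ := 1 + γ with hxdef
  have hx1 : 1 ≤ x := by simp [hxdef]; linarith
  rw [cheb_deriv, cheb_eq_eval]
  rcases Nat.eq_zero_or_pos d with hd | hd
  · subst hd; simp [Polynomial.Chebyshev.T_zero]
  set u := (Polynomial.Chebyshev.U ℝ ((d:ℤ) - 1)).eval x with hu
  set t := (Polynomial.Chebyshev.T ℝ (d:ℤ)).eval x with ht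
  have hpell : t ^ 2 - (x ^ 2 - 1) * u ^ 2 = 1 := pell d x
  have hu0 : 0 ≤ u := by
    have : (d:ℤ) - 1 = ((d - 1 : ℕ) : ℤ) := by omega
    rw [hu, this]
    exact (U_mono (d-1) x hx1).1
  have ht1 : 1 ≤ t := T_ge_one d x hx1
  have hsq : Real.sqrt (3 * γ) > 0 := Real.sqrt_pos.mpr (by linarith)
  have hx2 : x ^ 2 - 1 = 2 * γ + γ ^ 2 := by rw [hxdef]; ring
  have hkey : t - 1 ≤ Real.sqrt (3 * γ) * u := by
    have h1 : (t - 1) ^ 2 ≤ 3 * γ * u ^ 2 := by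
      nlinarith [mul_nonneg (mul_nonneg hγ0.le (by linarith : (0:ℝ) ≤ 1 - γ)) (sq_nonneg u)]
    have h2 : t - 1 = Real.sqrt ((t - 1) ^ 2) := (Real.sqrt_sq (by linarith)).symm
    have h3 : Real.sqrt (3 * γ) * u = Real.sqrt (3 * γ * u ^ 2) := by
      rw [show 3 * γ * u ^ 2 = (3 * γ) * u ^ 2 by ring,
        Real.sqrt_mul (by positivity) (u ^ 2), Real.sqrt_sq hu0]
    rw [h2, h3]
    exact Real.sqrt_le_sqrt h1
  have hdpos : (0:ℝ) < d := by exact_mod_cast hd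
  rw [ge_iff_le, div_mul_eq_mul_div, div_le_iff₀ hsq]
  calc (d:ℝ) * (t - 1) ≤ (d:ℝ) * (Real.sqrt (3 * γ) * u) :=
        mul_le_mul_of_nonneg_left hkey (le_of_lt hdpos)
    _ = (d:ℝ) * u * Real.sqrt (3 * γ) := by ring
end

section
/- Assume Constraints I and IVb. Then the one-sided limit of Φ(λ) as λ → 0⁺ exists and is a finite real number L₀ satisfying L₀ ≥ 2. -/
open Polynomial Polynomial.Chebyshev in
lemma cheb_eq_T : ∀ (n : ℕ) (x : ℝ), cheb n x = (T ℝ n).eval x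
  | 0, x => by simp [cheb]
  | 1, x => by simp [cheb]
  | (n+2), x => by
    rw [cheb, cheb_eq_T (n+1) x, cheb_eq_T n x,
      show ((n+2 : ℕ) : ℤ) = (n : ℤ) + 2 by push_cast; ring, T_add_two]
    push_cast
    simp [eval_mul, eval_add]

open Polynomial Polynomial.Chebyshev in
lemma T_real_cosh (n : ℤ) (t : ℝ) :
    (T ℝ n).eval (Real.cosh t) = Real.cosh (n * t) := by
  apply Complex.ofReal_injective
  push_cast [complex_ofReal_eval_T]
  rw [← Complex.cos_mul_I, T_complex_cos,
    show (n : ℂ) * ((t:ℂ) * Complex.I) = ((n * t : ℂ)) * Complex.I by ring,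
    Complex.cos_mul_I]

open Polynomial Polynomial.Chebyshev in
lemma U_real_sinh (n : ℤ) (t : ℝ) :
    (U ℝ n).eval (Real.cosh t) * Real.sinh t = Real.sinh ((n + 1) * t) := by
  have h := U_complex_cos ((t:ℂ) * Complex.I) n
  rw [Complex.cos_mul_I, Complex.sin_mul_I,
    show ((n:ℂ) + 1) * ((t:ℂ) * Complex.I) = (((n:ℂ)+1) * t) * Complex.I by ring,
    Complex.sin_mul_I] at h
  apply Complex.ofReal_injective
  push_cast [complex_ofReal_eval_U]
  exact mul_right_cancel₀ Complex.I_ne_zero (by linear_combination h)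

lemma sinh_le_mul_cosh {t : ℝ} (ht : 0 ≤ t) : Real.sinh t ≤ t * Real.cosh t := by
  have hder : ∀ x : ℝ, HasDerivAt (fun u => u * Real.cosh u - Real.sinh u) (x * Real.sinh x) x := by
    intro x
    have h1 := (hasDerivAt_id x).mul (Real.hasDerivAt_cosh x)
    have h2 := Real.hasDerivAt_sinh x
    refine (h1.sub h2).congr_deriv ?_
    simp
  have hmono : MonotoneOn (fun u => u * Real.cosh u - Real.sinh u) (Set.Ici (0:ℝ)) := by
    apply monotoneOn_of_deriv_nonneg (convex_Ici 0)
    · exact (Continuous.sub (continuous_id.mul Real.continuous_cosh) Real.continuous_sinh).continuousOn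
    · intro x hx
      exact (hder x).differentiableAt.differentiableWithinAt
    · intro x hx
      rw [(hder x).deriv]
      rw [interior_Ici] at hx
      exact mul_nonneg (le_of_lt hx) (Real.sinh_pos_iff.mpr hx).le
  have h := hmono (Set.self_mem_Ici) ht ht
  simp only [Real.cosh_zero, Real.sinh_zero, mul_one, zero_mul, sub_zero] at h
  linarith [h]


lemma cosh_le_two_sinh {s : ℝ} (hs : 1 ≤ s) : Real.cosh s ≤ 2 * Real.sinh s := by
  rw [Real.cosh_eq, Real.sinh_eq]
  have h1 : Real.exp 1 ≤ Real.exp s := Real.exp_le_exp.mpr hs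
  have h2 : Real.exp (-s) ≤ Real.exp (-1) := Real.exp_le_exp.mpr (by linarith)
  have h3 : (2:ℝ) ≤ Real.exp 1 := by linarith [Real.add_one_le_exp (1:ℝ)]
  have h5 : Real.exp (-1) * Real.exp 1 = 1 := by rw [← Real.exp_add]; norm_num
  nlinarith [Real.exp_pos s, Real.exp_pos (-s), Real.exp_pos (1:ℝ)]

lemma e1_aux {u v : ℝ} (h : (3 * Real.log 2 * u) ^ 2 ≤ v) : 3 * u ^ 2 ≤ v := by
  nlinarith [Real.log_two_gt_d9, sq_nonneg u,
    mul_self_nonneg (Real.log 2 - 0.6931471803), sq_nonneg (Real.log 2 * u)]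

lemma hq_aux {u v r ℓ : ℝ} (he : 3 * u ^ 2 ≤ v) (hr3 : 3 * ℓ ≤ r) (hℓ : 0 < ℓ)
    (hrl : 0 < r - ℓ) : 2 * r * u ^ 2 ≤ v * (r - ℓ) := by
  nlinarith [mul_le_mul_of_nonneg_right he hrl.le, sq_nonneg u]

lemma hAR_aux {r ℓ : ℝ} (hℓ : 0 < ℓ) (hlr : ℓ < r) : ((r - ℓ) / 2) ^ 2 ≤ r * (r - ℓ) / 2 := by
  nlinarith

lemma final_aux {N R C S E : ℝ} (hkey : 4 * N * R ≤ E) (hCS : C ≤ 2 * S)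
    (hS : 0 < S) (hR : 0 < R) (hN : 0 < N) : 2 * (N * R * C) ≤ E * S := by
  nlinarith [mul_le_mul_of_nonneg_left hCS (by positivity : (0:ℝ) ≤ 2 * N * R),
    mul_le_mul_of_nonneg_right hkey hS.le]

set_option maxHeartbeats 2000000 in
open Polynomial Polynomial.Chebyshev Filter in
/-- Under Constraints I and IVb, the one-sided limit of `Φ(λ)` as `λ → 0⁺`
exists, is finite, and is at least `2`. -/
theorem phi_limit_at_zero (ℓ r : ℝ) (hℓ : 0 < ℓ) (hℓr : ℓ < r) (hr : r ≤ 1)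
    (d : ℕ) (hd : 1 ≤ d) (ε : ℝ) (hε0 : 0 < ε) (hε1 : ε < 1) (n : ℕ) (hn : 1 ≤ n)
    (hCI : ConstraintI ℓ r d ε) (hCIVb : ConstraintIVb ℓ ε n) :
    ∃ L₀ : ℝ, Filter.Tendsto (Phi ℓ r d ε n) (nhdsWithin 0 (Set.Ioi 0)) (nhds L₀) ∧
      2 ≤ L₀ := by
  obtain ⟨hr3, hdI⟩ := hCI
  have hrl : (0:ℝ) < r - ℓ := by linarith
  have hr0 : (0:ℝ) < r := lt_trans hℓ hℓr
  have hn0 : (0:ℝ) < n := by exact_mod_cast Nat.lt_of_lt_of_le Nat.zero_lt_one hn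
  set x₀ : ℝ := (r + ℓ) / (r - ℓ) with hx₀def
  have hx₀gt : 1 < x₀ := by rw [hx₀def, lt_div_iff₀ hrl]; linarith
  have hx₀le2 : x₀ ≤ 2 := by rw [hx₀def, div_le_iff₀ hrl]; linarith
  have hargs : 1 + 2 * (ℓ / r) / (1 - ℓ / r) = x₀ := by
    rw [hx₀def]
    have h1 : (1:ℝ) - ℓ / r ≠ 0 := by
      have : ℓ / r < 1 := (div_lt_one hr0).mpr hℓr
      linarith
    field_simp
    ring
  set R : ℝ := Real.sqrt (r * ℓ) with hRdef
  have hRpos : 0 < R := Real.sqrt_pos.mpr (by positivity)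
  set y : ℝ := 2 * R / (r - ℓ) with hydef
  have hy0 : 0 < y := by positivity
  set θ : ℝ := Real.arsinh y with hθdef
  have hsinhθ : Real.sinh θ = y := Real.sinh_arsinh y
  have hy2 : 1 + y ^ 2 = x₀ ^ 2 := by
    rw [hydef, hx₀def]
    rw [div_pow, mul_pow, hRdef, Real.sq_sqrt (by positivity)]
    field_simp
    ring
  have hcoshθ : Real.cosh θ = x₀ := by
    rw [hθdef, Real.cosh_arsinh, hy2, Real.sqrt_sq (by linarith)]
  have hθpos : 0 < θ := Real.arsinh_pos_iff.mpr hy0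
  have hθge : R / (r - ℓ) ≤ θ := by
    have h1 : y ≤ θ * x₀ := by
      rw [← hsinhθ, ← hcoshθ]; exact sinh_le_mul_cosh hθpos.le
    have h2 : y ≤ 2 * θ := by
      have := mul_le_mul_of_nonneg_left hx₀le2 hθpos.le
      linarith
    rw [hydef, mul_div_assoc] at h2
    linarith
  set L : ℝ := Real.log (20 / ε) with hLdef
  have hL1 : 1 ≤ L := by
    rw [hLdef, Real.le_log_iff_exp_le (by positivity)]
    have h20 : (20:ℝ) ≤ 20 / ε := by
      rw [le_div_iff₀ hε0]; linarith
    have := Real.exp_one_lt_d9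
    linarith
  set A : ℝ := Real.sqrt ((r - ℓ) / (2 * ℓ)) with hAdef
  have hA0 : 0 ≤ A := Real.sqrt_nonneg _
  set s : ℝ := (d:ℝ) * θ with hsdef
  have hchebx₀ : (T ℝ (d:ℤ)).eval x₀ = Real.cosh s := by
    rw [← hcoshθ, _root_.T_real_cosh, hsdef]
    norm_num
  set C : ℝ := Real.cosh s with hCdef
  have hCpos : 0 < C := Real.cosh_pos (x := s)
  set S : ℝ := Real.sinh s with hSdef
  -- s ≥ 1
  have hAR : (r - ℓ) / 2 ≤ A * R := by
    have h1 : (0:ℝ) ≤ (r - ℓ) / (2 * ℓ) := div_nonneg hrl.le (by linarith)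
    have h2 : A * R = Real.sqrt ((r - ℓ) / (2 * ℓ) * (r * ℓ)) := by
      rw [hAdef, hRdef, ← Real.sqrt_mul h1]
    rw [h2, show (r - ℓ) / (2 * ℓ) * (r * ℓ) = r * (r - ℓ) / 2 by field_simp,
      Real.le_sqrt (by linarith : (0:ℝ) ≤ (r - ℓ) / 2)
        (by have := mul_nonneg hr0.le hrl.le; linarith)]
    exact hAR_aux hℓ hℓr
  have hs1 : 1 ≤ s := by
    have t1 : 4 * A * L * θ ≤ (d:ℝ) * θ := mul_le_mul_of_nonneg_right hdI hθpos.le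
    have t2 : 4 * A * L * (R / (r - ℓ)) ≤ 4 * A * L * θ :=
      mul_le_mul_of_nonneg_left hθge (by positivity)
    have t3 : 2 * L ≤ 4 * A * L * (R / (r - ℓ)) := by
      have h := mul_le_mul_of_nonneg_left hAR (show (0:ℝ) ≤ 4 * L / (r - ℓ) by positivity)
      calc 2 * L = 4 * L / (r - ℓ) * ((r - ℓ) / 2) := by field_simp; ring
        _ ≤ 4 * L / (r - ℓ) * (A * R) := h
        _ = 4 * A * L * (R / (r - ℓ)) := by field_simp
    rw [hsdef]
    linarith
  have hspos : (0:ℝ) < s := by linarith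
  have hSpos : 0 < S := Real.sinh_pos_iff.mpr hspos
  have hCS : C ≤ 2 * S := cosh_le_two_sinh hs1
  -- U value
  have hU : (U ℝ ((d:ℤ) - 1)).eval x₀ * y = S := by
    have h := U_real_sinh ((d:ℤ) - 1) θ
    rw [hcoshθ, hsinhθ] at h
    push_cast at h
    rw [show ((d:ℝ) - 1 + 1) = (d:ℝ) by ring] at h
    rw [hSdef, hsdef]
    exact h
  -- derivative of T at x₀
  have hTd : (Polynomial.derivative (T ℝ (d:ℤ))).eval x₀ = (d:ℝ) * ((U ℝ ((d:ℤ) - 1)).eval x₀) := by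
    rw [T_derivative_eq_U]
    simp
  -- δ
  have hδ : cDelta ℓ r d = 1 / C := by
    rw [cDelta, cheb_eq_T, hargs, hchebx₀]
  -- f and its properties
  set f : ℝ → ℝ := fun t => 1 + Pd ℓ r d t with hfdef
  have hfeq : f = fun t => 1 - (T ℝ (d:ℤ)).eval (psiMap ℓ r t) / C := by
    funext t
    rw [hfdef]
    simp only [Pd, hδ, cheb_eq_T]
    ring
  have hψ0 : psiMap ℓ r 0 = x₀ := by rw [psiMap, hx₀def]; norm_num
  have hf0 : f 0 = 0 := by
    rw [hfeq]
    simp only [hψ0, hchebx₀, ← hCdef]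
    field_simp
    simp
  set D : ℝ := 2 * (d:ℝ) * S / (y * (r - ℓ)) / C with hDdef
  have hψder : HasDerivAt (psiMap ℓ r) (-2 / (r - ℓ)) 0 := by
    have h := ((hasDerivAt_const (0:ℝ) (r + ℓ)).sub ((hasDerivAt_id (0:ℝ)).const_mul 2)).div_const (r - ℓ)
    refine h.congr_deriv ?_
    symm
    norm_num
  have hfder : HasDerivAt f D 0 := by
    have hTder := (Polynomial.hasDerivAt (T ℝ (d:ℤ)) (psiMap ℓ r 0)).comp 0 hψder
    have h := (hTder.div_const C).const_sub 1
    rw [hfeq]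
    refine h.congr_deriv ?_
    symm
    rw [hψ0, hTd]
    have hUval : (U ℝ ((d:ℤ) - 1)).eval x₀ = S / y := by
      field_simp [← hU]
      exact hU
    rw [hDdef, hUval]
    field_simp
  -- limits
  have hmap : Tendsto (fun lam : ℝ => lam * ℓ) (nhdsWithin 0 (Set.Ioi 0))
      (nhdsWithin 0 {(0:ℝ)}ᶜ) := by
    rw [tendsto_nhdsWithin_iff]
    constructor
    · have h : Tendsto (fun lam : ℝ => lam * ℓ) (nhds 0) (nhds (0 * ℓ)) :=
        (continuous_id.mul continuous_const).tendsto 0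
      rw [zero_mul] at h
      exact h.mono_left nhdsWithin_le_nhds
    · filter_upwards [self_mem_nhdsWithin] with lam hlam
      exact fun h => (ne_of_gt (mul_pos hlam hℓ)) h
  have hslope := hasDerivAt_iff_tendsto_slope.mp hfder
  have h2 : Tendsto (fun lam : ℝ => f (lam * ℓ) / (lam * ℓ)) (nhdsWithin 0 (Set.Ioi 0)) (nhds D) := by
    have h := hslope.comp hmap
    apply h.congr
    intro lam
    simp only [Function.comp_apply, slope_def_field, hf0, sub_zero]
  have h3 : Tendsto (fun lam : ℝ => f (lam * ℓ)) (nhdsWithin 0 (Set.Ioi 0)) (nhds 0) := by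
    have hc : ContinuousAt f 0 := hfder.continuousAt
    have h : Tendsto (fun lam : ℝ => lam * ℓ) (nhdsWithin 0 (Set.Ioi 0)) (nhds 0) := by
      have h' : Tendsto (fun lam : ℝ => lam * ℓ) (nhds 0) (nhds (0 * ℓ)) :=
        (continuous_id.mul continuous_const).tendsto 0
      rw [zero_mul] at h'
      exact h'.mono_left nhdsWithin_le_nhds
    have := hc.tendsto.comp h
    rwa [hf0] at this
  refine ⟨0 + (ε / (n:ℝ)) * D, ?_, ?_⟩
  · have hTend := h3.add (h2.const_mul (ε / (n:ℝ)))
    apply hTend.congr'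
    have hlt1 : ∀ᶠ lam : ℝ in nhdsWithin 0 (Set.Ioi 0), lam < 1 :=
      eventually_nhdsWithin_of_eventually_nhds (gt_mem_nhds (by norm_num))
    filter_upwards [self_mem_nhdsWithin, hlt1] with lam hlam hlam1
    have hlamp : (0:ℝ) < lam := hlam
    have hlamℓ : lam * ℓ < ℓ := by
      have := mul_lt_mul_of_pos_right hlam1 hℓ
      linarith
    have hne : lam * ℓ ≠ 0 := ne_of_gt (mul_pos hlamp hℓ)
    rw [Phi, Qstar, if_pos hlamℓ]
    have : (1:ℝ) + Pd ℓ r d (lam * ℓ) = f (lam * ℓ) := by rw [hfdef]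
    rw [this]
    field_simp
  · -- the bound
    have hM : Real.log (1 / ε) ≤ L := by
      rw [hLdef, Real.log_div (by norm_num) (ne_of_gt hε0),
        Real.log_div (by norm_num) (ne_of_gt hε0)]
      have : (0:ℝ) ≤ Real.log 20 := Real.log_nonneg (by norm_num)
      simp only [Real.log_one]
      linarith
    have hM0 : 0 ≤ Real.log (1 / ε) := Real.log_nonneg (by rw [le_div_iff₀ hε0]; linarith)
    have hεL : 3 * Real.log 2 * ((n:ℝ) * ℓ) ≤ ε * L := by
      have hlog2 : (0:ℝ) < Real.log 2 := Real.log_pos (by norm_num)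
      have hIVb := hCIVb
      rw [ConstraintIVb, Real.logb, Real.log_div (by norm_num) (ne_of_gt hε0)] at hIVb
      simp only [Real.log_one] at hIVb
      -- ℓ ≤ (1/3)*(ε/n)*((0 - log ε)/log 2)
      have h1 : (n:ℝ) * ℓ * (3 * Real.log 2) ≤ ε * (0 - Real.log ε) := by
        have := mul_le_mul_of_nonneg_left hIVb (show (0:ℝ) ≤ (n:ℝ) * (3 * Real.log 2) by positivity)
        calc (n:ℝ) * ℓ * (3 * Real.log 2) = (n:ℝ) * (3 * Real.log 2) * ℓ := by ring
          _ ≤ (n:ℝ) * (3 * Real.log 2) * (1 / 3 * (ε / ↑n) * ((0 - Real.log ε) / Real.log 2)) := this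
          _ = ε * (0 - Real.log ε) := by field_simp <;> ring
      have h2 : (0:ℝ) - Real.log ε = Real.log (1 / ε) := by
        rw [Real.log_div (by norm_num) (ne_of_gt hε0), Real.log_one]
      rw [h2] at h1
      have h3 : ε * Real.log (1 / ε) ≤ ε * L := mul_le_mul_of_nonneg_left hM hε0.le
      linarith
    have key : 4 * (n:ℝ) * R ≤ ε * (d:ℝ) := by
      have hεLA : (n:ℝ) * R ≤ ε * L * A := by
        have hsq : ((n:ℝ) * R) ^ 2 ≤ (ε * L * A) ^ 2 := by
          have hR2 : R ^ 2 = r * ℓ := Real.sq_sqrt (by positivity)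
          have hA2 : A ^ 2 = (r - ℓ) / (2 * ℓ) := Real.sq_sqrt (by positivity)
          have hεLpos : 0 ≤ 3 * Real.log 2 * ((n:ℝ) * ℓ) := by positivity
          have hsq1 : (3 * Real.log 2 * ((n:ℝ) * ℓ)) ^ 2 ≤ (ε * L) ^ 2 :=
            pow_le_pow_left₀ hεLpos hεL 2
          have hlog2 : (0.6931471803:ℝ) < Real.log 2 := Real.log_two_gt_d9
          have e1 : 3 * ((n:ℝ) * ℓ) ^ 2 ≤ (ε * L) ^ 2 := e1_aux hsq1
          have hq2 : 2 * r * ((n:ℝ) * ℓ) ^ 2 ≤ (ε * L) ^ 2 * (r - ℓ) :=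
            hq_aux e1 (by linarith) hℓ hrl
          have hq : (n:ℝ) ^ 2 * (r * ℓ) * (2 * ℓ) ≤ (ε * L) ^ 2 * (r - ℓ) := by
            calc (n:ℝ) ^ 2 * (r * ℓ) * (2 * ℓ) = 2 * r * ((n:ℝ) * ℓ) ^ 2 := by ring
              _ ≤ (ε * L) ^ 2 * (r - ℓ) := hq2
          rw [mul_pow, mul_pow, hR2, hA2, ← mul_div_assoc,
            le_div_iff₀ (by positivity : (0:ℝ) < 2 * ℓ)]
          exact hq
        have h0 : (0:ℝ) ≤ (n:ℝ) * R := by positivity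
        have := Real.sqrt_le_sqrt hsq
        rwa [Real.sqrt_sq h0, Real.sqrt_sq (by positivity)] at this
      calc 4 * (n:ℝ) * R = 4 * ((n:ℝ) * R) := by ring
        _ ≤ 4 * (ε * L * A) := by linarith
        _ = ε * (4 * A * L) := by ring
        _ ≤ ε * (d:ℝ) := mul_le_mul_of_nonneg_left hdI hε0.le
    have hyrl : y * (r - ℓ) = 2 * R := by rw [hydef]; field_simp
    have hDval : (ε / (n:ℝ)) * D = ε * (d:ℝ) * S / ((n:ℝ) * R * C) := by
      rw [hDdef, hyrl]
      field_simp
    rw [zero_add, hDval, le_div_iff₀ (by positivity)]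
    calc 2 * ((n:ℝ) * R * C) ≤ (ε * (d:ℝ)) * S := final_aux key hCS hSpos hRpos hn0
      _ = ε * (d:ℝ) * S := by ring
end

section
/- There exist a universal constant C > 0 and an integer N₀ such that for every integer n ≥ N₀ and every real ε with n^{−1/128} < ε < 1/3, there exist reals ℓ, r with 0 < ℓ < r ≤ 1, an integer d ≥ 1, and a real m > 0 satisfying Constraints I, II, III, and IV, and furthermore m ≤ C·(n/(ε·ln n))·ln²(1/ε). -/
set_option maxHeartbeats 1000000 in
/-- There are a universal constant `C > 0` and an integer `N₀` such that
for every `n ≥ N₀` and every `ε` with `n^{−1/128} < ε < 1/3`, there exist parameters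
`ℓ, r, d, m` satisfying Constraints I–IV with `m ≤ C·(n/(ε·ln n))·ln²(1/ε)`. -/
theorem parameter_optimization :
    ∃ C : ℝ, C > 0 ∧ ∃ N₀ : ℕ, ∀ n : ℕ, N₀ ≤ n → ∀ ε : ℝ,
      (n : ℝ) ^ (-(1 / 128) : ℝ) < ε → ε < 1 / 3 →
      ∃ ℓ r : ℝ, 0 < ℓ ∧ ℓ < r ∧ r ≤ 1 ∧ ∃ d : ℕ, 1 ≤ d ∧ ∃ m : ℝ, 0 < m ∧
        ConstraintI ℓ r d ε ∧ ConstraintII ℓ r d m ∧ ConstraintIII ℓ r d m ε n ∧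
        ConstraintIV ℓ ε n ∧
        m ≤ C * ((n : ℝ) / (ε * Real.log n)) * Real.log (1 / ε) ^ 2 := by
  refine ⟨200000, by norm_num, ⌈Real.exp 200⌉₊, fun n hn ε hε1 hε2 => ?_⟩
  have hn' : Real.exp 200 ≤ (n : ℝ) := le_trans (Nat.le_ceil _) (Nat.cast_le.mpr hn)
  have hn0 : (0:ℝ) < n := lt_of_lt_of_le (Real.exp_pos 200) hn'
  have hn201 : (201:ℝ) ≤ n := le_trans (by linarith [Real.add_one_le_exp (200:ℝ)]) hn'
  have hε0 : 0 < ε := lt_trans (Real.rpow_pos_of_pos hn0 _) hε1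
  set g := Real.log n with hgdef
  have hg : 200 ≤ g := (Real.le_log_iff_exp_le hn0).mpr hn'
  have hg0 : 0 < g := by linarith
  set X := (n:ℝ) ^ ((1:ℝ)/128) with hXdef
  have hX0 : 0 < X := Real.rpow_pos_of_pos hn0 _
  have hlogX : Real.log X = g / 128 := by rw [hXdef, Real.log_rpow hn0]; ring
  have hXn : X ^ (128:ℕ) = n := by
    rw [hXdef, ← Real.rpow_natCast ((n:ℝ) ^ ((1:ℝ)/128)) 128, ← Real.rpow_mul hn0.le]
    norm_num
  have hX2 : 2 ≤ X := by
    have h1 : (1:ℝ) ≤ Real.log X := by rw [hlogX]; linarith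
    have h2 := Real.exp_le_exp.mpr h1
    rw [Real.exp_log hX0] at h2
    have h3 := Real.exp_one_gt_d9
    linarith
  have hεX : 1 / X < ε := by
    rw [one_div, hXdef, ← Real.rpow_neg hn0.le]
    exact hε1
  have hεX1 : 1 ≤ ε * X := (div_le_iff₀ hX0).mp hεX.le
  have hgX : g ≤ 128 * X := by
    have h := Real.log_le_sub_one_of_pos hX0
    linarith [hlogX]
  set L := Real.log (1/ε) with hLdef
  have hL1 : 1 < L := by
    have h3 : (3:ℝ) < 1/ε := by rw [lt_div_iff₀ hε0]; linarith
    have h4 := Real.log_lt_log (by norm_num : (0:ℝ) < 3) h3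
    have h5 : (1:ℝ) ≤ Real.log 3 := by
      rw [Real.le_log_iff_exp_le (by norm_num : (0:ℝ) < 3)]
      linarith [Real.exp_one_lt_d9]
    rw [hLdef]; linarith
  have hLg : L < g / 128 := by
    have h1εX : 1/ε < X := by
      rw [div_lt_iff₀ hε0, mul_comm]
      exact (div_lt_iff₀ hX0).mp hεX
    have := Real.log_lt_log (by positivity) h1εX
    rw [← hLdef, hlogX] at this
    exact this
  set L₂ := Real.log (20/ε) with hL₂def
  have hL₂eq : L₂ = Real.log 20 + L := by
    rw [hL₂def, hLdef, Real.log_div (by norm_num) hε0.ne', Real.log_div one_ne_zero hε0.ne',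
      Real.log_one]
    ring
  have hexp3 : (20:ℝ) < Real.exp 3 := by
    have h := Real.exp_one_gt_d9
    have h3 : Real.exp 3 = Real.exp 1 * Real.exp 1 * Real.exp 1 := by
      rw [← Real.exp_add, ← Real.exp_add]; norm_num
    nlinarith
  have hlog20 : Real.log 20 ≤ 3.1 := by
    rw [Real.log_le_iff_le_exp (by norm_num)]
    have := Real.exp_le_exp.mpr (by norm_num : (3:ℝ) ≤ 3.1)
    linarith
  have hlog20pos : 0 < Real.log 20 := Real.log_pos (by norm_num)
  have hL₂1 : 1 < L₂ := by rw [hL₂eq]; linarith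
  have hL₂pos : 0 < L₂ := by linarith
  have hL₂L : L₂ ≤ 4.2 * L := by rw [hL₂eq]; linarith
  have hL₂ub : L₂ ≤ 3.1 + g/128 := by rw [hL₂eq]; linarith
  have hL₂g : L₂ ≤ g := by linarith
  have hL₂128X : L₂ ≤ 128 * X := hL₂g.trans hgX
  have hexp4 : (36:ℝ) < Real.exp 4 := by
    have h := Real.exp_one_gt_d9
    have h4 : Real.exp 4 = Real.exp 3 * Real.exp 1 := by
      rw [← Real.exp_add]; norm_num
    nlinarith [hexp3, Real.exp_pos 1]
  have hlog36 : Real.log 36 ≤ 4 := by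
    rw [Real.log_le_iff_le_exp (by norm_num)]
    linarith
  have hlog36pos : 0 ≤ Real.log 36 := Real.log_nonneg (by norm_num)
  set d := ⌈g/10⌉₊ with hddef
  have hd1 : 1 ≤ d := Nat.one_le_iff_ne_zero.mpr (by
    simp only [hddef, ne_eq, Nat.ceil_eq_zero, not_le]
    positivity)
  have hdR : (0:ℝ) < d := by exact_mod_cast hd1
  have hdlow : g/10 ≤ (d:ℝ) := Nat.le_ceil _
  have hdup : (d:ℝ) ≤ g/9 := by
    have := Nat.ceil_lt_add_one (by positivity : (0:ℝ) ≤ g/10)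
    rw [← hddef] at this
    linarith
  have hd20 : (20:ℝ) ≤ d := by linarith
  have hd4L₂ : 4 * L₂ ≤ (d:ℝ) := by linarith
  have hdX : (d:ℝ) ≤ 15 * X := by linarith
  have hd16 : 16 * L₂^2 ≤ (d:ℝ)^2 := by
    have h := mul_nonneg (by linarith : (0:ℝ) ≤ (d:ℝ) - 4*L₂)
      (by linarith : (0:ℝ) ≤ (d:ℝ) + 4*L₂)
    linarith [h, sq_nonneg ((d:ℝ) - 4*L₂)]
  -- parameters
  set ℓ := ε / (20 * (n:ℝ)) with hℓdef
  set Δ := (d:ℝ)^2 * ε / (160 * (n:ℝ) * L₂^2) with hΔdef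
  set r := ℓ + Δ with hrdef
  set m := 5.5 * (d:ℝ) / Δ with hmdef
  have hℓ0 : 0 < ℓ := by rw [hℓdef]; positivity
  have hden : (0:ℝ) < 160 * (n:ℝ) * L₂^2 :=
    mul_pos (mul_pos (by norm_num) hn0) (pow_pos hL₂pos 2)
  have hΔ0 : 0 < Δ := by
    rw [hΔdef]
    exact div_pos (mul_pos (pow_pos hdR 2) hε0) hden
  have hm0 : 0 < m := div_pos (mul_pos (by norm_num) hdR) hΔ0
  have hrl : r - ℓ = Δ := by rw [hrdef]; ring
  have hΔ2ℓ : 2 * ℓ ≤ Δ := by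
    have e : Δ - 2*ℓ = ((d:ℝ)^2 - 16*L₂^2) * ε / (160*(n:ℝ)*L₂^2) := by
      rw [hΔdef, hℓdef]
      field_simp
      ring
    have h : 0 ≤ ((d:ℝ)^2 - 16*L₂^2) * ε / (160*(n:ℝ)*L₂^2) :=
      div_nonneg (mul_nonneg (by linarith) hε0.le) hden.le
    linarith
  have hℓr : ℓ < r := by rw [hrdef]; linarith
  -- r ≤ 1
  have hd2n : (d:ℝ)^2 ≤ n := by
    have h126 : (2:ℝ)^126 ≤ X^126 := pow_le_pow_left₀ (by norm_num) hX2 126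
    have h1 : (d:ℝ)^2 ≤ 225 * X^2 := by
      have := pow_le_pow_left₀ hdR.le hdX 2
      calc (d:ℝ)^2 ≤ (15*X)^2 := this
        _ = 225 * X^2 := by ring
    have h2 : (225:ℝ) * X^2 ≤ X^126 * X^2 :=
      mul_le_mul_of_nonneg_right (le_trans (by norm_num) h126) (sq_nonneg X)
    calc (d:ℝ)^2 ≤ 225 * X^2 := h1
      _ ≤ X^126 * X^2 := h2
      _ = X^(128:ℕ) := by ring
      _ = n := hXn
  have hℓ60 : ℓ ≤ 1/60 := by
    rw [hℓdef, div_le_iff₀ (mul_pos (by norm_num : (0:ℝ) < 20) hn0)]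
    linarith
  have hΔ480 : Δ ≤ 1/480 := by
    rw [hΔdef, div_le_iff₀ hden]
    have h1 : (d:ℝ)^2 * ε ≤ (n:ℝ) * ε := mul_le_mul_of_nonneg_right hd2n hε0.le
    have h2 : (n:ℝ) * ε ≤ (n:ℝ) * (1/3) := mul_le_mul_of_nonneg_left hε2.le hn0.le
    have hsq1 : (1:ℝ) ≤ L₂^2 := by
      have h := pow_le_pow_left₀ (by norm_num : (0:ℝ) ≤ 1) hL₂1.le 2
      simpa using h
    have h3 : (n:ℝ) * 1 ≤ (n:ℝ) * L₂^2 := mul_le_mul_of_nonneg_left hsq1 hn0.le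
    linarith
  have hr1 : r ≤ 1 := by rw [hrdef]; linarith
  -- useful equation for m
  have hm_eq : m = 880 * (n:ℝ) * L₂^2 / ((d:ℝ) * ε) := by
    rw [hmdef, div_eq_div_iff hΔ0.ne' (mul_pos hdR hε0).ne', hΔdef, ← mul_div_assoc,
      eq_div_iff hden.ne']
    ring
  -- Constraint I
  have hI : ConstraintI ℓ r d ε := by
    refine ⟨by rw [hrdef]; linarith, ?_⟩
    have hratio : (r - ℓ) / (2 * ℓ) = ((d:ℝ) / (4 * L₂))^2 := by
      rw [hrl, hΔdef, hℓdef]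
      field_simp
      ring
    have hsq : Real.sqrt ((r - ℓ) / (2 * ℓ)) = (d:ℝ) / (4 * L₂) := by
      rw [hratio, Real.sqrt_sq (by positivity)]
    rw [← hL₂def, hsq]
    have h4 : 4 * ((d:ℝ) / (4 * L₂)) * L₂ = (d:ℝ) := by field_simp
    rw [h4]
  -- Constraint II
  have hII : ConstraintII ℓ r d m := by
    show m ≥ 5.5 * (d:ℝ) / (r - ℓ)
    rw [hrl]
  -- Constraint III
  have hεX3 : 1 ≤ ε^3 * X^3 := by
    calc (1:ℝ) = 1^3 := by norm_num
      _ ≤ (ε*X)^3 := pow_le_pow_left₀ (by norm_num) hεX1 3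
      _ = ε^3 * X^3 := by ring
  have hIII₁ : m ≤ ε^2 * (n:ℝ)^2 / 256 := by
    rw [hm_eq, div_le_div_iff₀ (mul_pos hdR hε0) (by norm_num : (0:ℝ) < 256)]
    have h123 : (2:ℝ)^123 ≤ X^123 := pow_le_pow_left₀ (by norm_num) hX2 123
    have hb : L₂^2 ≤ (128 * X)^2 := pow_le_pow_left₀ hL₂pos.le hL₂128X 2
    calc 880 * (n:ℝ) * L₂^2 * 256 = (225280 * X^(128:ℕ)) * L₂^2 := by rw [← hXn]; ring
      _ ≤ (225280 * X^(128:ℕ)) * (128 * X)^2 :=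
          mul_le_mul_of_nonneg_left hb (mul_nonneg (by norm_num) (pow_nonneg hX0.le 128))
      _ = 3690987520 * X^(130:ℕ) := by ring
      _ ≤ (20 * X^(123:ℕ)) * X^(130:ℕ) := by
          have h70 : (3690987520:ℝ) ≤ 20 * X^123 := by linarith
          exact mul_le_mul_of_nonneg_right h70 (pow_nonneg hX0.le 130)
      _ = (20 * 1) * X^(253:ℕ) := by ring
      _ ≤ ((d:ℝ) * (ε^3 * X^3)) * X^(253:ℕ) := by
          have h20 : (20:ℝ) * 1 ≤ (d:ℝ) * (ε^3 * X^3) :=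
            mul_le_mul hd20 hεX3 (by norm_num) hdR.le
          exact mul_le_mul_of_nonneg_right h20 (pow_nonneg hX0.le 253)
      _ = ε^2 * (n:ℝ)^2 * ((d:ℝ) * ε) := by rw [← hXn]; ring
  have key : (d:ℝ)^3 * 36^d * L₂^2 * 1280 ≤ 11 * (ε * (n:ℝ)) := by
    have h36 : (36:ℝ)^d ≤ X^(57:ℕ) := by
      have e1 : (36:ℝ)^d = Real.exp ((d:ℕ) * Real.log 36) := by
        rw [Real.exp_nat_mul, Real.exp_log (by norm_num : (0:ℝ) < 36)]
      have e2 : X^(57:ℕ) = Real.exp ((57:ℕ) * Real.log X) := by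
        rw [Real.exp_nat_mul, Real.exp_log hX0]
      rw [e1, e2]
      apply Real.exp_le_exp.mpr
      rw [hlogX]
      have t1 : (d:ℝ) * Real.log 36 ≤ (g/9) * Real.log 36 :=
        mul_le_mul_of_nonneg_right hdup hlog36pos
      have t2 : (g/9) * Real.log 36 ≤ (g/9) * 4 :=
        mul_le_mul_of_nonneg_left hlog36 (by linarith)
      push_cast
      linarith
    have hd3 : (d:ℝ)^3 ≤ 3375 * X^3 := by
      have := pow_le_pow_left₀ hdR.le hdX 3
      calc (d:ℝ)^3 ≤ (15*X)^3 := this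
        _ = 3375 * X^3 := by ring
    have hL2sq : L₂^2 ≤ 16384 * X^2 := by
      have := pow_le_pow_left₀ hL₂pos.le hL₂128X 2
      calc L₂^2 ≤ (128*X)^2 := this
        _ = 16384 * X^2 := by ring
    have h65 : (2:ℝ)^65 ≤ X^65 := pow_le_pow_left₀ (by norm_num) hX2 65
    have hεn : X^(127:ℕ) ≤ ε * (n:ℝ) := by
      calc X^(127:ℕ) = 1 * X^(127:ℕ) := by ring
        _ ≤ (ε * X) * X^(127:ℕ) := mul_le_mul_of_nonneg_right hεX1 (pow_nonneg hX0.le _)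
        _ = ε * X^(128:ℕ) := by ring
        _ = ε * n := by rw [hXn]
    have h36nn : (0:ℝ) ≤ 36^d := by positivity
    have s1 : (d:ℝ)^3 * 36^d ≤ (3375 * X^3) * X^57 :=
      mul_le_mul hd3 h36 h36nn (by positivity)
    have s2 : (d:ℝ)^3 * 36^d * L₂^2 ≤ ((3375 * X^3) * X^57) * (16384 * X^2) :=
      mul_le_mul s1 hL2sq (sq_nonneg L₂)
        (mul_nonneg (mul_nonneg (by norm_num) (pow_nonneg hX0.le 3)) (pow_nonneg hX0.le 57))
    calc (d:ℝ)^3 * 36^d * L₂^2 * 1280 ≤ ((3375 * X^3) * X^57) * (16384 * X^2) * 1280 := by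
          linarith
      _ = 70778880000 * X^(62:ℕ) := by ring
      _ ≤ (11 * X^(65:ℕ)) * X^(62:ℕ) := by
          have h70 : (70778880000:ℝ) ≤ 11 * X^65 := by linarith
          exact mul_le_mul_of_nonneg_right h70 (pow_nonneg hX0.le 62)
      _ = 11 * X^(127:ℕ) := by ring
      _ ≤ 11 * (ε * n) := by linarith
  have hIII₂ : (d:ℝ)^6 * 9^d * ((r + ℓ) / (r - ℓ))^(2*d - 2) ≤
      (1/4) * m * (r - ℓ)^2 * (n:ℝ)^2 := by
    rw [hrl]
    have hrpl : r + ℓ = 2 * ℓ + Δ := by rw [hrdef]; ring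
    have hρ2 : (r + ℓ) / Δ ≤ 2 := by rw [hrpl, div_le_iff₀ hΔ0]; linarith
    have hρ0 : 0 ≤ (r + ℓ) / Δ := by
      have h : 0 < r + ℓ := by rw [hrpl]; linarith
      exact (div_pos h hΔ0).le
    have hρpow : ((r + ℓ) / Δ)^(2*d - 2) ≤ 4^d := by
      calc ((r + ℓ) / Δ)^(2*d - 2) ≤ 2^(2*d - 2) := pow_le_pow_left₀ hρ0 hρ2 _
        _ ≤ 2^(2*d) := pow_le_pow_right₀ (by norm_num) (Nat.sub_le _ _)
        _ = 4^d := by rw [pow_mul]; norm_num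
    have hRHS : (1/4) * m * Δ^2 * (n:ℝ)^2 = 11 * ((d:ℝ)^3 * ε * (n:ℝ)) / (1280 * L₂^2) := by
      rw [hmdef, hΔdef]
      rw [eq_div_iff (by positivity : (1280:ℝ) * L₂^2 ≠ 0)]
      field_simp
      ring
    calc (d:ℝ)^6 * 9^d * ((r + ℓ) / Δ)^(2*d - 2)
        ≤ (d:ℝ)^6 * 9^d * 4^d := mul_le_mul_of_nonneg_left hρpow (by positivity)
      _ = (d:ℝ)^6 * 36^d := by rw [mul_assoc, ← mul_pow]; norm_num
      _ ≤ (1/4) * m * Δ^2 * (n:ℝ)^2 := by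
          rw [hRHS, le_div_iff₀ (by positivity : (0:ℝ) < 1280 * L₂^2)]
          calc (d:ℝ)^6 * 36^d * (1280 * L₂^2)
              = (d:ℝ)^3 * ((d:ℝ)^3 * 36^d * L₂^2 * 1280) := by ring
            _ ≤ (d:ℝ)^3 * (11 * (ε * n)) := mul_le_mul_of_nonneg_left key (by positivity)
            _ = 11 * ((d:ℝ)^3 * ε * (n:ℝ)) := by ring
  -- Constraint IV
  have hIV : ConstraintIV ℓ ε n := hℓdef.le
  -- final bound
  have hbound : m ≤ 200000 * ((n:ℝ) / (ε * g)) * L^2 := by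
    rw [hm_eq, div_le_iff₀ (mul_pos hdR hε0)]
    have h1 : L₂^2 ≤ 17.64 * L^2 := by
      have := pow_le_pow_left₀ hL₂pos.le hL₂L 2
      calc L₂^2 ≤ (4.2*L)^2 := this
        _ = 17.64 * L^2 := by ring
    have h2 : 200000 * ((n:ℝ) / (ε * g)) * L^2 * ((d:ℝ) * ε) =
        200000 * (n:ℝ) * L^2 * (d:ℝ) / g := by
      field_simp
    rw [h2, le_div_iff₀ hg0]
    have h3 : (n:ℝ) * g * L₂^2 ≤ (n:ℝ) * g * (17.64 * L^2) :=
      mul_le_mul_of_nonneg_left h1 (by positivity)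
    have h4 : (n:ℝ) * L^2 * (g/10) ≤ (n:ℝ) * L^2 * (d:ℝ) :=
      mul_le_mul_of_nonneg_left hdlow (by positivity)
    have h5 : (0:ℝ) ≤ (n:ℝ) * g * L^2 := mul_nonneg (mul_nonneg hn0.le hg0.le) (sq_nonneg L)
    linarith [h3, h4, h5]
  exact ⟨ℓ, r, hℓ0, hℓr, hr1, d, hd1, m, hm0, hI, hII, ⟨hIII₁, hIII₂⟩, hIV, hbound⟩
end
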